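/- Let $E$ be a real Banach space, $\varphi : E \to [0, \infty]$ proper convex, and for each $\lambda \ge 0$ let $u_\lambda, g_\lambda, h_\lambda$ satisfy $g_\lambda \in \partial\varphi(u_\lambda)$ and $h_\lambda + (1+\lambda) g_\lambda = w^*$ for a fixed $w^* \in E^*$, where $h_\lambda$ is monotone in the sense that $\langle h_\lambda - h_\nu, u_\lambda - u_\nu \rangle \ge 0$ for all $\lambda, \nu \ge 0$. Then $\lambda \mapsto \varphi(u_\lambda)$ is non-increasing: if $0 \le \lambda \le \nu$ then $\varphi(u_\nu) \le \varphi(u_\lambda)$. -/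

import Mathlib

open scoped ENNReal

/-- `g ∈ ∂φ(x)`. The inequality `φ x + g (v - x) ≤ φ v` is split into the positive and negative
parts of `g (v - x)` so that it can be stated in `ℝ≥0∞`. -/
def IsSubgradient {E : Type*} [AddCommGroup E] [Module ℝ E] [TopologicalSpace E]
    (φ : E → ℝ≥0∞) (x : E) (g : E →L[ℝ] ℝ) : Prop :=
  ∀ v : E, φ x + ENNReal.ofReal (g (v - x)) ≤ φ v + ENNReal.ofReal (-g (v - x))

namespace IsSubgradient

variable {E : Type*} [AddCommGroup E] [Module ℝ E] [TopologicalSpace E]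
  {φ : E → ℝ≥0∞} {x y : E} {g k : E →L[ℝ] ℝ}

theorem ne_top (hg : IsSubgradient φ x g) {v : E} (hv : φ v ≠ ⊤) : φ x ≠ ⊤ :=
  ne_top_of_le_ne_top (by finiteness) (le_self_add.trans (hg v))

theorem toReal_add_apply_le (hg : IsSubgradient φ x g) {v : E} (hv : φ v ≠ ⊤) :
    (φ x).toReal + g (v - x) ≤ (φ v).toReal := by
  have hle := ENNReal.toReal_mono (by finiteness) (hg v)
  rw [ENNReal.toReal_add (hg.ne_top hv) ENNReal.ofReal_ne_top,
    ENNReal.toReal_add hv ENNReal.ofReal_ne_top, ENNReal.toReal_ofReal',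
    ENNReal.toReal_ofReal'] at hle
  rcases le_total (g (v - x)) 0 with h | h
  · rw [max_eq_right h, max_eq_left (neg_nonneg.mpr h)] at hle
    linarith
  · rw [max_eq_left h, max_eq_right (neg_nonpos.mpr h)] at hle
    linarith

theorem smul_sub_smul_apply_le (hg : IsSubgradient φ x g) (hk : IsSubgradient φ y k)
    (hx : φ x ≠ ⊤) {s t : ℝ} (hs : 0 ≤ s) (ht : 0 ≤ t) :
    (t • k - s • g) (x - y) ≤ (t - s) * ((φ x).toReal - (φ y).toReal) := by
  have hgx : (φ x).toReal - (φ y).toReal ≤ g (x - y) := by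
    have := hg.toReal_add_apply_le (hk.ne_top hx)
    rw [← neg_sub, map_neg] at this
    linarith
  have hky : k (x - y) ≤ (φ x).toReal - (φ y).toReal := by
    linarith [hk.toReal_add_apply_le hx]
  simp only [sub_apply, smul_apply, smul_eq_mul]
  linarith [mul_le_mul_of_nonneg_left hgx hs, mul_le_mul_of_nonneg_left hky ht]

end IsSubgradient

theorem stmt8_general {E : Type*} [NormedAddCommGroup E] [NormedSpace ℝ E]
    (φ : E → ℝ≥0∞)
    (wstar : E →L[ℝ] ℝ) (u : ℝ → E) (g h : ℝ → (E →L[ℝ] ℝ))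
    (hsub : ∀ lam : ℝ, 0 ≤ lam → ∀ v : E,
      φ (u lam) + ENNReal.ofReal ((g lam) (v - u lam)) ≤
        φ v + ENNReal.ofReal (-((g lam) (v - u lam))))
    (heq : ∀ lam : ℝ, 0 ≤ lam → h lam + (1 + lam) • g lam = wstar)
    (hmono : ∀ lam nu : ℝ, 0 ≤ lam → 0 ≤ nu → 0 ≤ (h lam - h nu) (u lam - u nu)) :
    ∀ lam nu : ℝ, 0 ≤ lam → lam ≤ nu → φ (u nu) ≤ φ (u lam) := by
  intro lam nu hlam hlamnu
  have hnu : 0 ≤ nu := hlam.trans hlamnu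
  rcases eq_or_ne (φ (u lam)) ⊤ with htop | hfin
  · exact htop ▸ le_top
  rcases hlamnu.eq_or_lt with rfl | hlt
  · exact le_rfl
  have hdiff : h lam - h nu = (1 + nu) • g nu - (1 + lam) • g lam := by
    rw [← sub_eq_of_eq_add' (heq lam hlam).symm, ← sub_eq_of_eq_add' (heq nu hnu).symm]
    abel
  have hg_lam : IsSubgradient φ (u lam) (g lam) := hsub lam hlam
  have hg_nu : IsSubgradient φ (u nu) (g nu) := hsub nu hnu
  -- `(ν - λ)(φ(u_λ) - φ(u_ν)) ≥ ⟨h_λ - h_ν, u_λ - u_ν⟩ ≥ 0`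
  have key := hg_lam.smul_sub_smul_apply_le hg_nu hfin
    (by linarith : 0 ≤ 1 + lam) (by linarith : 0 ≤ 1 + nu)
  rw [← hdiff] at key
  have hle : (φ (u nu)).toReal ≤ (φ (u lam)).toReal := by
    nlinarith [hmono lam nu hlam hnu]
  exact (ENNReal.toReal_le_toReal (hg_nu.ne_top hfin) hfin).mp hle

/-- Monotonicity in `λ` of `φ(u_λ)` for solutions of
`h_λ + (1+λ) g_λ = w*`, `g_λ ∈ ∂φ(u_λ)`, when `λ ↦ h_λ` is monotone along `λ ↦ u_λ`.
The subgradient inequality is encoded as `φ(u_λ) + ⟨g_λ,v-u_λ⟩⁺ ≤ φ(v) + ⟨g_λ,v-u_λ⟩⁻`. -/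
theorem stmt8 {E : Type*} [NormedAddCommGroup E] [NormedSpace ℝ E] [CompleteSpace E]
    (φ : E → ℝ≥0∞)
    (hproper : ∃ u, φ u ≠ ⊤)
    (hconv : ∀ u v : E, ∀ τ : ℝ, 0 ≤ τ → τ ≤ 1 →
      φ (τ • u + (1 - τ) • v) ≤ ENNReal.ofReal τ * φ u + ENNReal.ofReal (1 - τ) * φ v)
    (wstar : E →L[ℝ] ℝ) (u : ℝ → E) (g h : ℝ → (E →L[ℝ] ℝ))
    (hsub : ∀ lam : ℝ, 0 ≤ lam → ∀ v : E,
      φ (u lam) + ENNReal.ofReal ((g lam) (v - u lam)) ≤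
        φ v + ENNReal.ofReal (-((g lam) (v - u lam))))
    (heq : ∀ lam : ℝ, 0 ≤ lam → h lam + (1 + lam) • g lam = wstar)
    (hmono : ∀ lam nu : ℝ, 0 ≤ lam → 0 ≤ nu → 0 ≤ (h lam - h nu) (u lam - u nu)) :
    ∀ lam nu : ℝ, 0 ≤ lam → lam ≤ nu → φ (u nu) ≤ φ (u lam) :=
  stmt8_general φ wstar u g h hsub heq hmono
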